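/- Let $V, W$ be real inner product spaces of dimensions $2$ and $3$, and let $L : V \to W$ be linear of rank $2$ and $A : W \to W$ nonnegative self-adjoint. With $\hat{A} := 2 L^* A L$, the derivative of $t \mapsto \|(I+tA)L\|_1$ at $t = 0$ equals $\frac{1}{2\|L\|_1}\left(\mathrm{tr}(\hat{A}) + \sqrt{\det(L^* L)}\,\mathrm{tr}((L^* L)^{-1}\hat{A})\right)$. -/

import Mathlib

/-!
For a positive semidefinite `2 × 2` matrix `M` with eigenvalues `λ, μ ≥ 0`,
`tr √M = √λ + √μ = √(tr M + 2 √(det M))`, so `‖X‖₁ = √(tr (Xᴴ X) + 2 √(det (Xᴴ X)))` for every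
`X` with two columns. Along `X t = (1 + t A) L` the Gram matrix is `Lᴴ L + t Â + t² Lᴴ A² L`,
whose trace has derivative `tr Â` and whose determinant has derivative
`tr (adj (Lᴴ L) Â) = det (Lᴴ L) tr ((Lᴴ L)⁻¹ Â)` at `t = 0` (Jacobi's formula). Rank `2` makes
`det (Lᴴ L) > 0`, so the chain rule applies through both square roots.
-/

open Matrix

/-- The 1-Schatten norm `‖L‖₁ = tr √(Lᴴ L)`. -/
noncomputable def schatten1 {m n : ℕ} (L : Matrix (Fin n) (Fin m) ℝ) : ℝ :=
  ((Matrix.posSemidef_conjTranspose_mul_self L).1.eigenvectorUnitary.1 *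
    diagonal ((√·) ∘ (Matrix.posSemidef_conjTranspose_mul_self L).1.eigenvalues) *
    (star (Matrix.posSemidef_conjTranspose_mul_self L).1.eigenvectorUnitary : Matrix (Fin m) (Fin m) ℝ)).trace

theorem Real.sqrt_add_sqrt_eq {a b : ℝ} (ha : 0 ≤ a) (hb : 0 ≤ b) :
    √a + √b = √(a + b + 2 * √(a * b)) := by
  rw [← Real.sqrt_sq (by positivity : 0 ≤ √a + √b), add_sq, Real.sq_sqrt ha, Real.sq_sqrt hb,
    Real.sqrt_mul ha]
  ring_nf

theorem schatten1_eq_sum_sqrt_eigenvalues {m n : ℕ} (L : Matrix (Fin n) (Fin m) ℝ) :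
    schatten1 L = ∑ i, √((posSemidef_conjTranspose_mul_self L).1.eigenvalues i) := by
  set U := (posSemidef_conjTranspose_mul_self L).1.eigenvectorUnitary
  rw [schatten1, trace_mul_comm, ← Matrix.mul_assoc,
    Unitary.star_mul_self_of_mem U.2, Matrix.one_mul, trace_diagonal]
  rfl

theorem schatten1_eq_sqrt_trace_add_two_sqrt_det {n : ℕ} (L : Matrix (Fin n) (Fin 2) ℝ) :
    schatten1 L = √((Lᴴ * L).trace + 2 * √(Lᴴ * L).det) := by
  have hC := posSemidef_conjTranspose_mul_self L
  rw [schatten1_eq_sum_sqrt_eigenvalues, Fin.sum_univ_two,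
    Real.sqrt_add_sqrt_eq (hC.eigenvalues_nonneg 0) (hC.eigenvalues_nonneg 1),
    hC.1.trace_eq_sum_eigenvalues, hC.1.det_eq_prod_eigenvalues]
  simp [Fin.sum_univ_two, Fin.prod_univ_two]

theorem Matrix.mulVec_injective_of_rank_eq_card {m n K : Type*} [Fintype n] [Field K]
    {L : Matrix m n K} (hL : L.rank = Fintype.card n) : Function.Injective L.mulVec := by
  have h := LinearMap.finrank_range_add_finrank_ker L.mulVecLin
  rw [← Matrix.rank, hL, Module.finrank_fintype_fun_eq_card, add_eq_left,
    Submodule.finrank_eq_zero] at h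
  rw [← coe_mulVecLin, ← LinearMap.ker_eq_bot, h]

open scoped ComplexOrder in
theorem Matrix.det_conjTranspose_mul_self_pos {m n 𝕜 : Type*} [Fintype m] [Fintype n]
    [DecidableEq n] [RCLike 𝕜] {L : Matrix m n 𝕜} (hL : L.rank = Fintype.card n) :
    0 < (Lᴴ * L).det :=
  (PosDef.conjTranspose_mul_self L (mulVec_injective_of_rank_eq_card hL)).det_pos

theorem Matrix.conjTranspose_mul_self_one_add_smul_mul {m n : Type*} [Fintype m] [DecidableEq m]
    {A : Matrix m m ℝ} (hA : A.IsHermitian) (L : Matrix m n ℝ) (t : ℝ) :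
    ((1 + t • A) * L)ᴴ * ((1 + t • A) * L)
      = Lᴴ * L + t • ((2 : ℝ) • (Lᴴ * A * L)) + t ^ 2 • (Lᴴ * A * A * L) := by
  simp only [conjTranspose_mul, conjTranspose_add, conjTranspose_smul,
    hA.eq, star_trivial, Matrix.mul_add, Matrix.add_mul, Matrix.smul_mul, Matrix.mul_smul,
    Matrix.one_mul, Matrix.mul_assoc]
  module

section Derivatives

variable {𝕜 : Type*} [NontriviallyNormedField 𝕜]

theorem hasDerivAt_add_smul_add_sq_smul_apply {m n : Type*} (C D B : Matrix m n 𝕜)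
    (i : m) (j : n) :
    HasDerivAt (fun t : 𝕜 => (C + t • D + t ^ 2 • B) i j) (D i j) 0 := by
  simpa using ((hasDerivAt_mul_const (D i j)).const_add (C i j)).fun_add
    ((hasDerivAt_pow 2 (0 : 𝕜)).mul_const (B i j))

theorem Matrix.hasDerivAt_trace {n : Type*} [Fintype n] {f : 𝕜 → Matrix n n 𝕜}
    {f' : Matrix n n 𝕜} {x : 𝕜} (hf : ∀ i, HasDerivAt (fun t => f t i i) (f' i i) x) :
    HasDerivAt (fun t => (f t).trace) f'.trace x := by
  simpa [trace] using HasDerivAt.fun_sum fun i _ => hf i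

theorem Matrix.hasDerivAt_det_fin_two {f : 𝕜 → Matrix (Fin 2) (Fin 2) 𝕜}
    {f' : Matrix (Fin 2) (Fin 2) 𝕜} {x : 𝕜} (hf : ∀ i j, HasDerivAt (fun t => f t i j) (f' i j) x) :
    HasDerivAt (fun t => (f t).det) ((f x).adjugate * f').trace x := by
  rw [show (fun t => (f t).det) = _ from funext fun t => det_fin_two (f t)]
  refine (((hf 0 0).fun_mul (hf 1 1)).fun_sub ((hf 0 1).fun_mul (hf 1 0))).congr_deriv ?_
  rw [adjugate_fin_two, trace_fin_two]
  simp only [mul_apply, Fin.sum_univ_two, of_apply, cons_val_zero, cons_val_one]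
  ring

end Derivatives

theorem hasDerivAt_sqrt_trace_add_two_sqrt_det {f : ℝ → Matrix (Fin 2) (Fin 2) ℝ}
    {f' : Matrix (Fin 2) (Fin 2) ℝ} {x : ℝ} (hf : ∀ i j, HasDerivAt (fun t => f t i j) (f' i j) x)
    (htrace : 0 ≤ (f x).trace) (hdet : 0 < (f x).det) :
    HasDerivAt (fun t => √((f t).trace + 2 * √(f t).det))
      ((f'.trace + √(f x).det * ((f x)⁻¹ * f').trace) / (2 * √((f x).trace + 2 * √(f x).det)))
      x := by
  refine (((hasDerivAt_trace fun i => hf i i).fun_add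
    (((hasDerivAt_det_fin_two hf).sqrt hdet.ne').const_mul 2)).sqrt
      (by positivity)).congr_deriv ?_
  rw [inv_def, Ring.inverse_eq_inv', smul_mul, trace_smul, smul_eq_mul]
  field_simp
  linear_combination -((f x).adjugate * f').trace * Real.sq_sqrt hdet.le

/-- for `L` of rank 2 and `A` nonnegative self-adjoint, with
`Â := 2 Lᴴ A L`, the derivative of `t ↦ ‖(I + tA) L‖₁` at `t = 0` equals
`(tr Â + √det(Lᴴ L) · tr((Lᴴ L)⁻¹ Â)) / (2 ‖L‖₁)`. -/
theorem hasDerivAt_schatten1_formula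
    (L : Matrix (Fin 3) (Fin 2) ℝ) (hL : L.rank = 2)
    (A : Matrix (Fin 3) (Fin 3) ℝ) (hA : A.PosSemidef) :
    HasDerivAt (fun t : ℝ => schatten1 ((1 + t • A) * L))
      ((1 / (2 * schatten1 L)) * (((2 : ℝ) • (Lᴴ * A * L)).trace
        + Real.sqrt ((Lᴴ * L).det) * ((Lᴴ * L)⁻¹ * ((2 : ℝ) • (Lᴴ * A * L))).trace)) 0 := by
  have hdet : 0 < (Lᴴ * L).det := det_conjTranspose_mul_self_pos (by simpa using hL)
  have key := hasDerivAt_sqrt_trace_add_two_sqrt_det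
    (hasDerivAt_add_smul_add_sq_smul_apply (Lᴴ * L) ((2 : ℝ) • (Lᴴ * A * L)) (Lᴴ * A * A * L))
    (by simpa using (posSemidef_conjTranspose_mul_self L).trace_nonneg) (by simpa using hdet)
  simp only [zero_smul, zero_pow two_ne_zero, add_zero] at key
  simp only [schatten1_eq_sqrt_trace_add_two_sqrt_det,
    conjTranspose_mul_self_one_add_smul_mul hA.1, one_div_mul_eq_div]
  exact key
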